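/- arXiv:2203.10831 — 5 statements merged into one kernel-verified Lean document; each statement's English description precedes it below -/
import Mathlib

section
/- Let r ≥ 1 and let n₁, …, n_r be positive integers. The spectral radius λ of the complete r-partite graph K_r(n₁, …, n_r) satisfies the equation Σ_{i=1}^{r} n_i / (λ + n_i) = 1. -/
open SimpleGraph

/-- The adjacency matrix of a simple graph over `ℝ`. -/
noncomputable def adjMat {V : Type*} [Fintype V] (G : SimpleGraph V) : Matrix V V ℝ :=
  letI := Classical.decRel G.Adj
  G.adjMatrix ℝ

/-- The spectral radius of a simple graph: the largest eigenvalue of its adjacency matrix. -/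
noncomputable def specRad {V : Type*} [Fintype V] [DecidableEq V] (G : SimpleGraph V) : ℝ :=
  sSup (spectrum ℝ (adjMat G))

/-- The number of edges of a simple graph. -/
noncomputable def eCnt {V : Type*} (G : SimpleGraph V) : ℕ := Nat.card G.edgeSet

/-- `G` contains a copy of `F` (a subgraph isomorphic to `F`). -/
def Contains {W V : Type*} (F : SimpleGraph W) (G : SimpleGraph V) : Prop :=
  ∃ f : F →g G, Function.Injective f

/-- `G` is `F`-free. -/
def FFree {W V : Type*} (F : SimpleGraph W) (G : SimpleGraph V) : Prop := ¬ Contains F G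

/-- The Turán number `ex(n, F)`. -/
noncomputable def exNum {W : Type*} (n : ℕ) (F : SimpleGraph W) : ℕ :=
  sSup {m | ∃ G : SimpleGraph (Fin n), FFree F G ∧ eCnt G = m}

/-- `G` is obtained from the Turán graph `T_{n,r}` by adding `a` edges. -/
def TuranPlus (n r a : ℕ) (G : SimpleGraph (Fin n)) : Prop :=
  (∃ H : SimpleGraph (Fin n), H ≤ G ∧ Nonempty (H ≃g turanGraph n r)) ∧
    eCnt G = eCnt (turanGraph n r) + a

/-- Hypothesis (★): for all sufficiently large `m`, `ex(m,F) = e(T_{m,r}) + a` and every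
extremal graph is obtained from `T_{m,r}` by adding `a` edges. -/
def HypStar {W : Type*} (r a : ℕ) (F : SimpleGraph W) : Prop :=
  ∃ m₀ : ℕ, ∀ m ≥ m₀,
    exNum m F = eCnt (turanGraph m r) + a ∧
    ∀ G : SimpleGraph (Fin m), FFree F G → eCnt G = exNum m F → TuranPlus m r a G

/-- `G` is a spectral-extremal `F`-free graph on its vertex set. -/
def SpecExtremal {W : Type*} (F : SimpleGraph W) {n : ℕ} (G : SimpleGraph (Fin n)) : Prop :=
  FFree F G ∧ ∀ G' : SimpleGraph (Fin n), FFree F G' → specRad G' ≤ specRad G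

open Finset Matrix

/-- If the equation Σ nᵢ/(x+nᵢ) = 1 has a nonneg root. -/
lemma stmt3_exists_root (r : ℕ) (hr : 1 ≤ r) (c : Fin r → ℕ) (hc : ∀ i, 0 < c i) :
    ∃ l : ℝ, 0 ≤ l ∧ ∑ i, (c i : ℝ) / (l + c i) = 1 := by
  have hcpos : ∀ i, (0:ℝ) < c i := fun i => by exact_mod_cast hc i
  set N : ℝ := ∑ i, (c i : ℝ) with hNdef
  have hN : 0 < N := by
    apply Finset.sum_pos (fun i _ => hcpos i)
    exact univ_nonempty_iff.2 (Fin.pos_iff_nonempty.mp hr)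
  set f : ℝ → ℝ := fun x => ∑ i, (c i : ℝ) / (x + c i) with hfdef
  have hcont : ContinuousOn f (Set.Icc 0 N) := by
    apply continuousOn_finset_sum
    intro i _
    apply ContinuousOn.div continuousOn_const (continuousOn_id.add continuousOn_const)
    intro x hx
    simp only [Pi.add_apply, id_eq]
    have := hx.1
    intro h
    nlinarith [hcpos i]
  have hf0 : 1 ≤ f 0 := by
    have : f 0 = r := by
      simp only [hfdef, zero_add]
      rw [Finset.sum_congr rfl (fun i _ => div_self (hcpos i).ne')]
      simp
    rw [this]; exact_mod_cast hr
  have hfN : f N ≤ 1 := by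
    have : f N ≤ ∑ i, (c i : ℝ) / N := by
      apply Finset.sum_le_sum
      intro i _
      exact div_le_div_of_nonneg_left (hcpos i).le hN (by linarith [hcpos i])
    rw [← Finset.sum_div, ← hNdef, div_self hN.ne'] at this
    exact this
  obtain ⟨x, hx, hfx⟩ := intermediate_value_Icc' hN.le hcont ⟨hfN, hf0⟩
  exact ⟨x, hx.1, hfx⟩

/-- The Perron vector of the complete multipartite graph. -/
lemma stmt3_eigen (r : ℕ) (c : Fin r → ℕ) (l : ℝ) (hden : ∀ i, 0 < l + (c i:ℝ))
    (hroot : ∑ i, (c i : ℝ) / (l + c i) = 1) :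
    adjMat (completeMultipartiteGraph fun i => Fin (c i)) *ᵥ (fun u => (l + (c u.1:ℝ))⁻¹)
      = l • (fun u => (l + (c u.1:ℝ))⁻¹) := by
  classical
  set G := completeMultipartiteGraph fun i => Fin (c i) with hG
  letI : DecidableRel G.Adj := Classical.decRel G.Adj
  funext u
  have h1 : (adjMat G *ᵥ (fun u => (l + (c u.1:ℝ))⁻¹)) u
      = ∑ w ∈ G.neighborFinset u, (l + (c w.1:ℝ))⁻¹ := by
    rw [adjMat]
    exact adjMatrix_mulVec_apply (G := G) u _
  rw [h1]
  have h2 : G.neighborFinset u = univ.filter (fun w => u.1 ≠ w.1) := by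
    ext w
    simp [neighborFinset, G.mem_neighborSet, hG]
  rw [h2, Finset.sum_filter]
  rw [← Finset.univ_sigma_univ, Finset.sum_sigma]
  have h3 : ∀ j : Fin r, ∑ _k : Fin (c j), (if u.1 ≠ j then (l + (c j:ℝ))⁻¹ else 0)
      = (if u.1 ≠ j then (c j:ℝ) / (l + (c j:ℝ)) else 0) := by
    intro j
    rw [Finset.sum_const, card_univ, Fintype.card_fin]
    by_cases h : u.1 ≠ j <;> simp [h, div_eq_mul_inv, mul_comm]
  rw [Finset.sum_congr rfl (fun j _ => h3 j)]
  have h4 : ∀ j : Fin r, (if u.1 ≠ j then (c j:ℝ) / (l + (c j:ℝ)) else 0)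
      = (c j:ℝ) / (l + (c j:ℝ)) - (if j = u.1 then (c j:ℝ) / (l + (c j:ℝ)) else 0) := by
    intro j
    by_cases h : j = u.1 <;> simp [h, eq_comm]
  rw [Finset.sum_congr rfl (fun j _ => h4 j), Finset.sum_sub_distrib, hroot,
    Finset.sum_ite_eq' univ u.1]
  simp only [mem_univ, if_true, Pi.smul_apply, smul_eq_mul]
  have := hden u.1
  field_simp
  ring

lemma stmt3_mem_spec {n : Type*} [Fintype n] [DecidableEq n] (A : Matrix n n ℝ) (μ : ℝ)
    {v : n → ℝ} (hv : v ≠ 0) (h : A *ᵥ v = μ • v) : μ ∈ spectrum ℝ A := by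
  rw [spectrum.mem_iff]
  intro hU
  rw [Matrix.isUnit_iff_isUnit_det, isUnit_iff_ne_zero] at hU
  apply hU
  rw [← Matrix.exists_mulVec_eq_zero_iff]
  refine ⟨v, hv, ?_⟩
  rw [Matrix.sub_mulVec, h, Algebra.algebraMap_eq_smul_one, Matrix.smul_mulVec,
    Matrix.one_mulVec, sub_self]

lemma stmt3_spec_mem {n : Type*} [Fintype n] [DecidableEq n] (A : Matrix n n ℝ) (μ : ℝ)
    (h : μ ∈ spectrum ℝ A) : ∃ v, v ≠ 0 ∧ A *ᵥ v = μ • v := by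
  rw [spectrum.mem_iff] at h
  rw [Matrix.isUnit_iff_isUnit_det, isUnit_iff_ne_zero, not_not,
    ← Matrix.exists_mulVec_eq_zero_iff] at h
  obtain ⟨v, hv, hv2⟩ := h
  refine ⟨v, hv, ?_⟩
  rw [Matrix.sub_mulVec, Algebra.algebraMap_eq_smul_one, Matrix.smul_mulVec,
    Matrix.one_mulVec, sub_eq_zero] at hv2
  exact hv2.symm

/-- Perron-type bound: a symmetric nonnegative matrix with a positive eigenvector for
eigenvalue `l` has all eigenvalues at most `l`. -/
lemma stmt3_bound {n : Type*} [Fintype n] [DecidableEq n] (A : Matrix n n ℝ)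
    (hsymm : ∀ i j, A i j = A j i) (hnn : ∀ i j, 0 ≤ A i j)
    (v : n → ℝ) (hv : ∀ i, 0 < v i) (l : ℝ) (hl : A *ᵥ v = l • v)
    (μ : ℝ) (hμ : μ ∈ spectrum ℝ A) : μ ≤ l := by
  obtain ⟨w, hw0, hw⟩ := stmt3_spec_mem A μ hμ
  set s : ℝ := ∑ i, v i * |w i| with hs
  have hspos : 0 < s := by
    obtain ⟨i₀, hi₀⟩ := Function.ne_iff.mp hw0
    apply Finset.sum_pos' (fun i _ => mul_nonneg (hv i).le (abs_nonneg _))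
    exact ⟨i₀, mem_univ _, mul_pos (hv i₀) (abs_pos.2 (by simpa using hi₀))⟩
  have key : |μ| * s ≤ l * s := by
    have h1 : ∀ i, |μ| * |w i| = |(A *ᵥ w) i| := by
      intro i; rw [hw]; simp [abs_mul]
    have h2 : ∀ i, |(A *ᵥ w) i| ≤ ∑ j, A i j * |w j| := by
      intro i
      rw [Matrix.mulVec, dotProduct]
      refine (Finset.abs_sum_le_sum_abs _ _).trans ?_
      apply Finset.sum_le_sum
      intro j _
      rw [abs_mul, abs_of_nonneg (hnn i j)]
    calc |μ| * s = ∑ i, v i * (|μ| * |w i|) := by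
          rw [hs, Finset.mul_sum]; congr 1; funext i; ring
      _ ≤ ∑ i, v i * (∑ j, A i j * |w j|) := by
          apply Finset.sum_le_sum
          intro i _
          exact mul_le_mul_of_nonneg_left ((h1 i).le.trans (h2 i)) (hv i).le
      _ = ∑ j, (∑ i, A j i * v i) * |w j| := by
          simp_rw [Finset.mul_sum]
          rw [Finset.sum_comm]
          congr 1; funext j
          rw [Finset.sum_mul]
          congr 1; funext i
          rw [hsymm j i]; ring
      _ = ∑ j, l * (v j * |w j|) := by
          congr 1; funext j
          have : (∑ i, A j i * v i) = (A *ᵥ v) j := rfl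
          rw [this, hl]; simp; ring
      _ = l * s := by rw [hs, Finset.mul_sum]
  have := le_of_mul_le_mul_right (by simpa [mul_comm] using key) hspos
  exact (le_abs_self μ).trans this

theorem stmt_3 (r : ℕ) (hr : 1 ≤ r) (c : Fin r → ℕ) (hc : ∀ i, 0 < c i) :
    ∑ i : Fin r, (c i : ℝ) /
        (specRad (completeMultipartiteGraph fun i => Fin (c i)) + c i) = 1 := by
  classical
  obtain ⟨l, hl0, hroot⟩ := stmt3_exists_root r hr c hc
  have hcpos : ∀ i, (0:ℝ) < c i := fun i => by exact_mod_cast hc i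
  have hden : ∀ i, 0 < l + (c i : ℝ) := fun i => by linarith [hcpos i]
  set G := completeMultipartiteGraph fun i => Fin (c i) with hG
  set v : (Σ i, Fin (c i)) → ℝ := fun u => (l + (c u.1:ℝ))⁻¹ with hv
  have hvpos : ∀ u, 0 < v u := fun u => inv_pos.2 (hden u.1)
  have hv0 : v ≠ 0 := by
    obtain ⟨i₀⟩ := Fin.pos_iff_nonempty.mp hr
    intro h
    have := congrFun h ⟨i₀, ⟨0, hc i₀⟩⟩
    exact (hvpos _).ne' this
  have heig : adjMat G *ᵥ v = l • v := stmt3_eigen r c l hden hroot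
  have hmem : l ∈ spectrum ℝ (adjMat G) := stmt3_mem_spec (adjMat G) l hv0 heig
  have hsymm : ∀ i j, adjMat G i j = adjMat G j i := by
    intro i j
    simp only [adjMat, SimpleGraph.adjMatrix_apply]
    by_cases h : G.Adj i j
    · rw [if_pos h, if_pos (G.adj_symm h)]
    · rw [if_neg h, if_neg (fun h' => h (G.adj_symm h'))]
  have hnn : ∀ i j, 0 ≤ adjMat G i j := by
    intro i j
    simp only [adjMat, SimpleGraph.adjMatrix_apply]
    split <;> norm_num
  have hbd : ∀ μ ∈ spectrum ℝ (adjMat G), μ ≤ l :=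
    fun μ hμ => stmt3_bound (adjMat G) hsymm hnn v hvpos l heig μ hμ
  have hspec : specRad G = l := by
    rw [specRad]
    exact le_antisymm (csSup_le ⟨l, hmem⟩ hbd) (le_csSup ⟨l, hbd⟩ hmem)
  rw [hspec]
  exact hroot
end

section
/- Let r ≥ 2 and let n₁, …, n_r be positive integers. If n_i − n_j ≥ 2 for some indices i, j, then λ(K_r(n₁, …, n_i − 1, …, n_j + 1, …, n_r)) > λ(K_r(n₁, …, n_i, …, n_j, …, n_r)); that is, moving one vertex from a part that is larger by at least 2 to a smaller part strictly increases the spectral radius of a complete multipartite graph. -/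
open SimpleGraph

open Matrix in
lemma specRad_key {r : ℕ} (hr : 2 ≤ r) (m : Fin r → ℕ) (hm : ∀ k, 0 < m k) :
    0 < specRad (completeMultipartiteGraph fun k => Fin (m k)) ∧
      ∑ k, (m k : ℝ) /
        (specRad (completeMultipartiteGraph fun k => Fin (m k)) + m k) = 1 := by
  classical
  set G := completeMultipartiteGraph fun k => Fin (m k) with hG
  set A : Matrix _ _ ℝ := adjMat G with hAdef
  have hAdj : ∀ v w : (Σ k, Fin (m k)), G.Adj v w ↔ v.1 ≠ w.1 := by
    intro v w; simp [hG]
  have hAvw : ∀ v w : (Σ k, Fin (m k)), A v w = if v.1 = w.1 then 0 else 1 := by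
    intro v w
    simp only [hAdef, adjMat, SimpleGraph.adjMatrix_apply]
    by_cases h : v.1 = w.1
    · rw [if_neg, if_pos h]
      rw [hAdj]; simpa using h
    · rw [if_pos, if_neg h]
      rw [hAdj]; exact h
  have hA : A.IsHermitian := by
    ext v w
    simp only [conjTranspose_apply, star_trivial, hAvw]
    by_cases h : v.1 = w.1 <;> simp [h, eq_comm, Ne, (· = ·)]
  have hVne : Nonempty (Σ k, Fin (m k)) := by
    have h0 : 0 < r := by omega
    exact ⟨⟨⟨0, h0⟩, ⟨0, hm _⟩⟩⟩
  set L : ℝ := specRad G with hLdef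
  have hLs : L = sSup (spectrum ℝ A) := rfl
  have hspec : spectrum ℝ A = Set.range hA.eigenvalues :=
    hA.spectrum_real_eq_range_eigenvalues
  have hfin : (spectrum ℝ A).Finite := Matrix.finite_real_spectrum
  have hne : (spectrum ℝ A).Nonempty := by
    rw [hspec]; exact Set.range_nonempty _
  have hmem : L ∈ spectrum ℝ A := by rw [hLs]; exact hne.csSup_mem hfin
  have hbdd : BddAbove (spectrum ℝ A) := hfin.bddAbove
  have hle : ∀ x ∈ spectrum ℝ A, x ≤ L := fun x hx => le_csSup hbdd hx
  -- trace = sum of eigenvalues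
  have htr : ∑ v, hA.eigenvalues v = 0 := by
    have h1 : Matrix.trace A = 0 := by
      simp [hAdef, adjMat]
    have h2 : Matrix.trace A = ∑ v, hA.eigenvalues v := by
      conv_lhs => rw [hA.spectral_theorem]
      rw [Unitary.conjStarAlgAut_apply, Matrix.trace_mul_cycle, Unitary.coe_star_mul_self, one_mul,
        Matrix.trace_diagonal]
      simp
    rw [← h2, h1]
  -- positivity of L
  have hL : 0 < L := by
    by_contra hcon
    push_neg at hcon
    have hall : ∀ v, hA.eigenvalues v ≤ 0 := fun v =>
      le_trans (hle _ (hA.eigenvalues_mem_spectrum_real v)) hcon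
    have hall0 : ∀ v, hA.eigenvalues v = 0 := by
      intro v
      have h := Finset.sum_eq_zero_iff_of_nonneg
        (f := fun v => -hA.eigenvalues v) (s := Finset.univ)
        (fun v _ => neg_nonneg.2 (hall v))
      have hsum0 : ∑ v, -hA.eigenvalues v = 0 := by
        rw [Finset.sum_neg_distrib, htr, neg_zero]
      have h3 := (h.mp hsum0) v (Finset.mem_univ v)
      linarith
    have hA0 : A = 0 := by
      have hd : (Matrix.diagonal (RCLike.ofReal ∘ hA.eigenvalues) :
          Matrix (Σ k, Fin (m k)) (Σ k, Fin (m k)) ℝ) = 0 := by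
        ext v w
        by_cases h : v = w <;> simp [Matrix.diagonal, h, hall0]
      rw [hA.spectral_theorem, hd, map_zero]
    have h0 : 0 < r := by omega
    have h1 : 1 < r := by omega
    have : A ⟨⟨0, h0⟩, ⟨0, hm _⟩⟩ ⟨⟨1, h1⟩, ⟨0, hm _⟩⟩ = 1 := by
      rw [hAvw]
      simp [Fin.ext_iff]
    rw [hA0] at this
    simp at this
  -- extract an eigenvector for L
  rw [spectrum.mem_iff] at hmem
  have hdet : ((algebraMap ℝ (Matrix ((k : Fin r) × Fin (m k)) ((k : Fin r) × Fin (m k)) ℝ)) L - A).det = 0 := by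
    by_contra hd
    exact hmem ((Matrix.isUnit_iff_isUnit_det _).2 (Ne.isUnit hd))
  obtain ⟨u, hu0, hu⟩ := (Matrix.exists_mulVec_eq_zero_iff).2 hdet
  have huA : A *ᵥ u = L • u := by
    rw [Matrix.sub_mulVec] at hu
    have h2 : (algebraMap ℝ (Matrix ((k : Fin r) × Fin (m k)) ((k : Fin r) × Fin (m k)) ℝ) L) *ᵥ u = L • u := by
      rw [Algebra.algebraMap_eq_smul_one, Matrix.smul_mulVec, Matrix.one_mulVec]
    rw [h2] at hu
    have := sub_eq_zero.1 hu
    exact this.symm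
  set T : ℝ := ∑ v, u v with hT
  set σ : Fin r → ℝ := fun k => ∑ p, u ⟨k, p⟩ with hσ
  have hTσ : T = ∑ k, σ k := by
    rw [hT, ← Finset.univ_sigma_univ, Finset.sum_sigma]
  have h1 : ∀ v : (Σ k, Fin (m k)), L * u v = T - σ v.1 := by
    intro v
    have hv := congrFun huA v
    have hlhs : (A *ᵥ u) v = ∑ w, (if v.1 = w.1 then (0:ℝ) else 1) * u w := by
      simp [Matrix.mulVec, dotProduct, hAvw]
    have hsplit : ∑ w : (Σ k, Fin (m k)), (if v.1 = w.1 then (0:ℝ) else 1) * u w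
        = ∑ k, if v.1 = k then 0 else σ k := by
      rw [← Finset.univ_sigma_univ, Finset.sum_sigma]
      refine Finset.sum_congr rfl fun k _ => ?_
      by_cases h : v.1 = k <;> simp [h, hσ]
    have hsum2 : ∑ k, (if v.1 = k then (0:ℝ) else σ k) = T - σ v.1 := by
      have heach : ∀ k, (if v.1 = k then (0:ℝ) else σ k)
          = σ k - (if v.1 = k then σ k else 0) := by
        intro k; by_cases h : v.1 = k <;> simp [h]
      rw [Finset.sum_congr rfl fun k _ => heach k, Finset.sum_sub_distrib,
        Finset.sum_ite_eq]
      simp [hTσ]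
    rw [hlhs, hsplit, hsum2] at hv
    have hsm : (L • u) v = L * u v := rfl
    rw [hsm] at hv
    exact hv.symm
  have h2 : ∀ k, (L + (m k : ℝ)) * σ k = (m k : ℝ) * T := by
    intro k
    have hsum : ∑ p : Fin (m k), L * u ⟨k, p⟩ = ∑ _p : Fin (m k), (T - σ k) :=
      Finset.sum_congr rfl fun p _ => h1 ⟨k, p⟩
    rw [← Finset.mul_sum] at hsum
    simp only [Finset.sum_const, Finset.card_univ, Fintype.card_fin, nsmul_eq_mul] at hsum
    have hsum2 : L * σ k = (m k : ℝ) * (T - σ k) := hsum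
    linear_combination hsum2
  have hmpos : ∀ k, (0:ℝ) < L + (m k : ℝ) := by
    intro k
    have : (0:ℝ) ≤ (m k : ℝ) := Nat.cast_nonneg _
    linarith
  have hT0 : T ≠ 0 := by
    intro hT00
    have hσ0 : ∀ k, σ k = 0 := by
      intro k
      have h := h2 k
      rw [hT00, mul_zero] at h
      exact (mul_eq_zero.1 h).resolve_left (ne_of_gt (hmpos k))
    have hu00 : u = 0 := by
      funext v
      have h := h1 v
      rw [hT00, hσ0] at h
      have h' : L * u v = 0 := by simpa using h
      exact (mul_eq_zero.1 h').resolve_left (ne_of_gt hL)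
    exact hu0 hu00
  refine ⟨hL, ?_⟩
  have hσk : ∀ k, σ k = (m k : ℝ) * T / (L + m k) := by
    intro k
    rw [eq_div_iff (ne_of_gt (hmpos k))]
    linear_combination h2 k
  have hTT : T * ∑ k, (m k : ℝ) / (L + m k) = T := by
    rw [Finset.mul_sum]
    conv_rhs => rw [hTσ]
    refine Finset.sum_congr rfl fun k _ => ?_
    rw [hσk k]
    ring
  rcases (mul_right_eq_self₀).1 hTT with h | h
  · exact h
  · exact absurd h hT0

theorem stmt_4 (r : ℕ) (hr : 2 ≤ r) (c : Fin r → ℕ) (hc : ∀ i, 0 < c i)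
    (i j : Fin r) (hij : c j + 2 ≤ c i) :
    specRad (completeMultipartiteGraph fun k =>
        Fin (Function.update (Function.update c i (c i - 1)) j (c j + 1) k)) >
      specRad (completeMultipartiteGraph fun k => Fin (c k)) := by
  classical
  have hij' : i ≠ j := by
    rintro rfl; omega
  set c' : Fin r → ℕ := Function.update (Function.update c i (c i - 1)) j (c j + 1)
    with hc'def
  have hc'j : c' j = c j + 1 := by simp [hc'def]
  have hc'i : c' i = c i - 1 := by
    rw [hc'def, Function.update_of_ne hij', Function.update_self]
  have hc'k : ∀ k, k ≠ i → k ≠ j → c' k = c k := by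
    intro k hki hkj
    rw [hc'def, Function.update_of_ne hkj, Function.update_of_ne hki]
  have hc' : ∀ k, 0 < c' k := by
    intro k
    by_cases h1 : k = j
    · subst h1; rw [hc'j]; omega
    by_cases h2 : k = i
    · subst h2; rw [hc'i]; omega
    · rw [hc'k k h2 h1]; exact hc k
  obtain ⟨hL, hE⟩ := specRad_key hr c hc
  obtain ⟨hL', hE'⟩ := specRad_key hr c' hc'
  set L := specRad (completeMultipartiteGraph fun k => Fin (c k)) with hLd
  set L' := specRad (completeMultipartiteGraph fun k => Fin (c' k)) with hLd'
  have hcast_i : ((c' i : ℕ) : ℝ) = (c i : ℝ) - 1 := by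
    rw [hc'i, Nat.cast_sub (by omega : 1 ≤ c i)]
    simp
  have hcast_j : ((c' j : ℕ) : ℝ) = (c j : ℝ) + 1 := by
    rw [hc'j]; push_cast; ring
  have hnij : (c j : ℝ) + 2 ≤ (c i : ℝ) := by exact_mod_cast hij
  have hnj1 : (1 : ℝ) ≤ (c j : ℝ) := by exact_mod_cast hc j
  -- the key strict inequality at the point L
  have hgt : (1 : ℝ) < ∑ k, (c' k : ℝ) / (L + c' k) := by
    rw [← hE]
    have hdecomp : ∑ k, ((c' k : ℝ) / (L + c' k) - (c k : ℝ) / (L + c k))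
        = ((c' i : ℝ) / (L + c' i) - (c i : ℝ) / (L + c i))
          + ((c' j : ℝ) / (L + c' j) - (c j : ℝ) / (L + c j)) := by
      have h0 : ∑ k, ((c' k : ℝ) / (L + c' k) - (c k : ℝ) / (L + c k))
          = ∑ k ∈ ({i, j} : Finset (Fin r)),
              ((c' k : ℝ) / (L + c' k) - (c k : ℝ) / (L + c k)) := by
        refine (Finset.sum_subset (Finset.subset_univ _) ?_).symm
        intro k _ hk
        simp only [Finset.mem_insert, Finset.mem_singleton, not_or] at hk
        rw [hc'k k hk.1 hk.2]
        ring
      rw [h0, Finset.sum_pair hij']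
    have hpos : 0 < ∑ k, ((c' k : ℝ) / (L + c' k) - (c k : ℝ) / (L + c k)) := by
      rw [hdecomp, hcast_i, hcast_j]
      have d1 : 0 < L + ((c i : ℝ) - 1) := by linarith
      have d2 : 0 < L + (c i : ℝ) := by linarith
      have d3 : 0 < L + ((c j : ℝ) + 1) := by linarith
      have d4 : 0 < L + (c j : ℝ) := by linarith
      have e1 : ((c i : ℝ) - 1) / (L + ((c i : ℝ) - 1)) - (c i : ℝ) / (L + (c i : ℝ))
          = -(L / ((L + ((c i : ℝ) - 1)) * (L + (c i : ℝ)))) := by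
        field_simp
        ring
      have e2 : ((c j : ℝ) + 1) / (L + ((c j : ℝ) + 1)) - (c j : ℝ) / (L + (c j : ℝ))
          = L / ((L + (c j : ℝ)) * (L + ((c j : ℝ) + 1))) := by
        field_simp
        ring
      rw [e1, e2]
      have hlt : (L + (c j : ℝ)) * (L + ((c j : ℝ) + 1))
          < (L + ((c i : ℝ) - 1)) * (L + (c i : ℝ)) := by nlinarith
      have := div_lt_div_of_pos_left hL (by positivity) hlt
      linarith
    have hsd : ∑ k, ((c' k : ℝ) / (L + c' k) - (c k : ℝ) / (L + c k))
        = (∑ k, (c' k : ℝ) / (L + c' k)) - ∑ k, (c k : ℝ) / (L + c k) :=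
      Finset.sum_sub_distrib _ _
    linarith
  -- conclude by monotonicity
  by_contra hcon
  push_neg at hcon
  have hmono : ∀ k, (c' k : ℝ) / (L + c' k) ≤ (c' k : ℝ) / (L' + c' k) := by
    intro k
    have hck : (0:ℝ) ≤ (c' k : ℝ) := Nat.cast_nonneg _
    have h1 : (0:ℝ) < L' + (c' k : ℝ) := by
      have : (0:ℝ) < (c' k : ℝ) := by exact_mod_cast hc' k
      linarith
    exact div_le_div_of_nonneg_left hck h1 (by linarith)
  have hsum : ∑ k, (c' k : ℝ) / (L + c' k) ≤ ∑ k, (c' k : ℝ) / (L' + c' k) :=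
    Finset.sum_le_sum fun k _ => hmono k
  rw [hE'] at hsum
  linarith
end

section
/- Let r ≥ 2 be an integer and let F be a graph satisfying Hypothesis (★) with constant a. Then for all sufficiently large n, every spectral-extremal graph G for F on n vertices satisfies λ(G) ≥ (1 − 1/r)·n − r/(4n) + 2a/n. -/
open SimpleGraph

open Finset

lemma eCnt_eq {V : Type*} [Fintype V] (G : SimpleGraph V) [DecidableRel G.Adj] [Fintype G.edgeSet] :
    eCnt G = G.edgeFinset.card := by
  rw [eCnt, Nat.card_eq_fintype_card, SimpleGraph.edgeFinset_card]

lemma rayleigh_lb {n : ℕ} (hn : 0 < n) (G : SimpleGraph (Fin n)) :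
    (2 * eCnt G : ℝ) / n ≤ specRad G := by
  classical
  set A := adjMat G with hAdef
  have hA : A.IsHermitian := by
    ext i j
    simp [hAdef, adjMat, Matrix.conjTranspose_apply, SimpleGraph.adj_comm]
  set T := Matrix.toEuclideanLin A with hTdef
  have hT : T.IsSymmetric := (Matrix.isHermitian_iff_isSymmetric).mp hA
  haveI : Nonempty (Fin n) := ⟨⟨0, hn⟩⟩
  haveI : Nontrivial (EuclideanSpace ℝ (Fin n)) :=
    inferInstance
  set μ : ℝ := ⨆ x : {x : EuclideanSpace ℝ (Fin n) // x ≠ 0},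
      RCLike.re (inner ℝ (T x) (x : EuclideanSpace ℝ (Fin n)) : ℝ) / ‖(x : EuclideanSpace ℝ (Fin n))‖ ^ 2 with hμdef
  have hev : Module.End.HasEigenvalue T μ := hT.hasEigenvalue_iSup_of_finiteDimensional
  have hmem : μ ∈ spectrum ℝ A := by
    rw [← Matrix.spectrum_toEuclideanLin (A := A)]
    exact hev.mem_spectrum
  have h1 : μ ≤ specRad G :=
    le_csSup (Matrix.finite_spectrum A).bddAbove hmem
  -- now lower bound μ by the Rayleigh quotient at the all-ones vector
  set x₀ : EuclideanSpace ℝ (Fin n) := (WithLp.equiv 2 (Fin n → ℝ)).symm (fun _ => 1) with hx₀def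
  have hx₀ : x₀ ≠ 0 := by
    intro hzero
    have h0 : (x₀ ⟨0, hn⟩ : ℝ) = 1 := rfl
    rw [hzero] at h0
    norm_num at h0
  -- bounded above
  have hbdd : BddAbove (Set.range fun x : {x : EuclideanSpace ℝ (Fin n) // x ≠ 0} =>
      RCLike.re (inner ℝ (T x) (x : EuclideanSpace ℝ (Fin n)) : ℝ) / ‖(x : EuclideanSpace ℝ (Fin n))‖ ^ 2) := by
    refine ⟨‖LinearMap.toContinuousLinearMap T‖, ?_⟩
    rintro y ⟨x, rfl⟩
    have hx : (0:ℝ) < ‖(x : EuclideanSpace ℝ (Fin n))‖ := norm_pos_iff.mpr x.2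
    rw [div_le_iff₀ (by positivity)]
    calc RCLike.re (inner ℝ (T x) (x : EuclideanSpace ℝ (Fin n)) : ℝ)
        = (inner ℝ (T x) (x : EuclideanSpace ℝ (Fin n)) : ℝ) := rfl
      _ ≤ ‖T (x : EuclideanSpace ℝ (Fin n))‖ * ‖(x : EuclideanSpace ℝ (Fin n))‖ := real_inner_le_norm _ _
      _ ≤ (‖LinearMap.toContinuousLinearMap T‖ * ‖(x : EuclideanSpace ℝ (Fin n))‖) * ‖(x : EuclideanSpace ℝ (Fin n))‖ := by
          gcongr
          exact (LinearMap.toContinuousLinearMap T).le_opNorm _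
      _ = ‖LinearMap.toContinuousLinearMap T‖ * ‖(x : EuclideanSpace ℝ (Fin n))‖ ^ 2 := by ring
  have h2 : RCLike.re (inner ℝ (T x₀) (x₀ : EuclideanSpace ℝ (Fin n)) : ℝ) / ‖x₀‖ ^ 2 ≤ μ :=
    le_ciSup hbdd (⟨x₀, hx₀⟩ : {x : EuclideanSpace ℝ (Fin n) // x ≠ 0})
  -- compute the Rayleigh quotient at x₀
  have hTx₀ : ∀ i, T x₀ i = ∑ j, A i j := by
    intro i
    show (Matrix.mulVec A (fun _ => (1:ℝ))) i = _
    simp [Matrix.mulVec, dotProduct]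
  have hinner : (inner ℝ (T x₀) (x₀ : EuclideanSpace ℝ (Fin n)) : ℝ) = 2 * eCnt G := by
    rw [PiLp.inner_apply]
    have : ∀ i, (inner ℝ (T x₀ i) (x₀ i) : ℝ) = ∑ j, A i j := by
      intro i
      have : (x₀ i : ℝ) = 1 := rfl
      simp [RCLike.inner_apply, this, hTx₀ i]
    rw [Finset.sum_congr rfl fun i _ => this i]
    have : ∑ i, ∑ j, A i j = ∑ i : Fin n, (G.degree i : ℝ) := by
      refine Finset.sum_congr rfl fun i _ => ?_
      simp [hAdef, adjMat, Finset.sum_boole, SimpleGraph.degree, SimpleGraph.neighborFinset_eq_filter]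
    rw [this]
    rw [← Nat.cast_sum]
    rw [SimpleGraph.sum_degrees_eq_twice_card_edges]
    rw [eCnt_eq]
    push_cast
    ring
  have hnorm : ‖x₀‖ ^ 2 = (n : ℝ) := by
    rw [← real_inner_self_eq_norm_sq, PiLp.inner_apply]
    have h1 : ∀ i, x₀ i = 1 := fun _ => rfl
    simp [RCLike.inner_apply, h1]
  rw [hinner, hnorm] at h2
  have h2' : (2 * (eCnt G:ℝ)) / n ≤ μ := by simpa using h2
  exact le_trans h2' h1


/-- number of naturals below `n` congruent to `s` mod `r` -/
def cnt (n r s : ℕ) : ℕ := ((Finset.range n).filter (· % r = s)).card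

lemma cnt_le (n r s : ℕ) (hr : 0 < r) : cnt n r s ≤ n / r + 1 := by
  have hsub : (Finset.range n).filter (· % r = s) ⊆
      (Finset.range (n / r + 1)).image (fun j => j * r + s) := by
    intro i hi
    simp only [mem_filter, mem_range] at hi
    refine mem_image.mpr ⟨i / r, mem_range.mpr ?_, ?_⟩
    · exact Nat.lt_succ_of_le (Nat.div_le_div_right hi.1.le)
    · rw [← hi.2]; exact Nat.div_add_mod' i r
  calc cnt n r s ≤ _ := Finset.card_le_card hsub
    _ ≤ (Finset.range (n / r + 1)).card := Finset.card_image_le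
    _ = n / r + 1 := by simp

lemma cnt_ge (n r s : ℕ) (hr : 0 < r) (hs : s < r) : n / r ≤ cnt n r s := by
  have hinj : Function.Injective (fun j => j * r + s) := by
    intro a b hab
    simpa using Nat.eq_of_mul_eq_mul_right hr (Nat.add_right_cancel hab)
  have hsub : (Finset.range (n / r)).image (fun j => j * r + s) ⊆
      (Finset.range n).filter (· % r = s) := by
    intro i hi
    obtain ⟨j, hj, rfl⟩ := mem_image.mp hi
    rw [mem_range] at hj
    refine mem_filter.mpr ⟨mem_range.mpr ?_, ?_⟩
    · calc j * r + s < j * r + r := by omega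
        _ = (j + 1) * r := by ring
        _ ≤ (n / r) * r := Nat.mul_le_mul_right r (by omega)
        _ ≤ n := Nat.div_mul_le_self n r
    · show (j * r + s) % r = s
      simp [Nat.add_mod, Nat.mul_mod_left, Nat.mod_eq_of_lt hs]
      
  calc n / r = ((Finset.range (n / r)).image (fun j => j * r + s)).card := by
        rw [Finset.card_image_of_injective _ hinj, Finset.card_range]
    _ ≤ cnt n r s := Finset.card_le_card hsub

lemma cnt_sum (n r : ℕ) (hr : 0 < r) : ∑ s ∈ Finset.range r, cnt n r s = n := by
  have := (Finset.card_eq_sum_card_fiberwise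
    (f := (· % r)) (s := Finset.range n) (t := Finset.range r)
    (fun i _ => mem_range.mpr (Nat.mod_lt i hr)))
  simpa [cnt] using this.symm

lemma turan_deg (n r : ℕ) (v : Fin n) :
    (turanGraph n r).degree v + cnt n r ((v : ℕ) % r) = n := by
  classical
  have hdeg : (turanGraph n r).degree v =
      (Finset.univ.filter (fun w : Fin n => ¬ ((w:ℕ) % r = (v:ℕ) % r))).card := by
    rw [← SimpleGraph.card_neighborFinset_eq_degree, SimpleGraph.neighborFinset_eq_filter]
    congr 1
    apply Finset.filter_congr
    intro w _
    show (turanGraph n r).Adj v w ↔ _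
    constructor
    · intro h h2; exact h h2.symm
    · intro h h2; exact h h2.symm
  have hcnt : cnt n r ((v:ℕ) % r) =
      (Finset.univ.filter (fun w : Fin n => (w:ℕ) % r = (v:ℕ) % r)).card := by
    rw [cnt]
    refine Finset.card_bij (fun i hi => ⟨i, (Finset.mem_filter.mp hi).1 |> Finset.mem_range.mp⟩)
      ?_ ?_ ?_
    · intro i hi
      simp only [Finset.mem_filter, Finset.mem_range] at hi ⊢
      exact ⟨Finset.mem_univ _, hi.2⟩
    · intro i hi j hj hij
      simpa [Fin.mk.injEq] using congrArg Fin.val hij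
    · intro w hw
      refine ⟨(w:ℕ), ?_, by simp⟩
      simp only [Finset.mem_filter, Finset.mem_range] at hw ⊢
      exact ⟨w.isLt, hw.2⟩
  rw [hdeg, hcnt]
  have := Finset.card_filter_add_card_filter_not
    (s := (Finset.univ : Finset (Fin n))) (p := fun w : Fin n => (w:ℕ) % r = (v:ℕ) % r)
  simp only [Finset.card_univ, Fintype.card_fin] at this
  omega


lemma sum_cnt_sq (n r : ℕ) (hr : 0 < r) :
    ∑ v : Fin n, cnt n r ((v : ℕ) % r) = ∑ s ∈ Finset.range r, (cnt n r s) ^ 2 := by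
  rw [Fin.sum_univ_eq_sum_range (fun i => cnt n r (i % r)) n]
  rw [← Finset.sum_fiberwise_of_maps_to (g := (· % r)) (t := Finset.range r)
    (fun i hi => Finset.mem_range.mpr (Nat.mod_lt i hr)) (fun i => cnt n r (i % r))]
  refine Finset.sum_congr rfl fun s hs => ?_
  rw [Finset.sum_congr rfl fun x hx => by
    rw [(Finset.mem_filter.mp hx).2]]
  rw [Finset.sum_const, smul_eq_mul, sq]
  rfl

lemma turan_edges (n r : ℕ) (hr : 0 < r) :
    2 * (turanGraph n r).edgeFinset.card + ∑ s ∈ Finset.range r, (cnt n r s) ^ 2 = n ^ 2 := by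
  have h1 := SimpleGraph.sum_degrees_eq_twice_card_edges (turanGraph n r)
  have h2 : ∑ v : Fin n, ((turanGraph n r).degree v + cnt n r ((v : ℕ) % r)) = n * n := by
    rw [Finset.sum_congr rfl fun v _ => turan_deg n r v]
    simp [Finset.card_univ, mul_comm]
  rw [Finset.sum_add_distrib, h1, sum_cnt_sq n r hr] at h2
  rw [pow_two]; exact h2

lemma cnt_sq_bound (n r : ℕ) (hr : 0 < r) :
    (∑ s ∈ Finset.range r, ((cnt n r s : ℝ)) ^ 2) ≤ (n : ℝ) ^ 2 / r + r / 4 := by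
  set q : ℕ := n / r with hq
  have hsum : (∑ s ∈ Finset.range r, ((cnt n r s : ℝ))) = n := by
    rw [← Nat.cast_sum, cnt_sum n r hr]
  have hterm : ∀ s ∈ Finset.range r,
      ((cnt n r s : ℝ)) ^ 2 ≤ (2 * q + 1) * (cnt n r s : ℝ) - q * (q + 1) := by
    intro s hs
    have h1 : (q : ℝ) ≤ (cnt n r s : ℝ) := by
      exact_mod_cast cnt_ge n r s hr (Finset.mem_range.mp hs)
    have h2 : (cnt n r s : ℝ) ≤ q + 1 := by
      exact_mod_cast cnt_le n r s hr
    nlinarith [mul_nonneg (sub_nonneg.mpr h1) (sub_nonneg.mpr h2)]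
  have hS : (∑ s ∈ Finset.range r, ((cnt n r s : ℝ)) ^ 2) ≤
      (2 * q + 1) * n - r * (q * (q + 1)) := by
    calc (∑ s ∈ Finset.range r, ((cnt n r s : ℝ)) ^ 2)
        ≤ ∑ s ∈ Finset.range r, ((2 * q + 1) * (cnt n r s : ℝ) - q * (q + 1)) :=
          Finset.sum_le_sum hterm
      _ = (2 * q + 1) * n - r * (q * (q + 1)) := by
          rw [Finset.sum_sub_distrib, ← Finset.mul_sum, hsum, Finset.sum_const,
            Finset.card_range, nsmul_eq_mul]
  have hm : n = r * q + n % r := (Nat.div_add_mod n r).symm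
  have hmr : n % r < r := Nat.mod_lt n hr
  have hmcast : (n : ℝ) = r * q + (n % r : ℕ) := by exact_mod_cast hm
  have hmrcast : ((n % r : ℕ) : ℝ) < r := by exact_mod_cast hmr
  have hr' : (0 : ℝ) < r := by exact_mod_cast hr
  rw [div_add_div _ _ (ne_of_gt hr') (by norm_num), le_div_iff₀ (by positivity)]
  nlinarith [sq_nonneg (((n % r : ℕ) : ℝ) - r / 2)]


lemma exNum_attained {W : Type*} (F : SimpleGraph W) {n : ℕ} (G0 : SimpleGraph (Fin n))
    (h0 : FFree F G0) : ∃ G' : SimpleGraph (Fin n), FFree F G' ∧ eCnt G' = exNum n F := by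
  have hbdd : BddAbove {m | ∃ G : SimpleGraph (Fin n), FFree F G ∧ eCnt G = m} := by
    refine ⟨Nat.card (Sym2 (Fin n)), ?_⟩
    rintro m ⟨G, -, rfl⟩
    exact Nat.card_le_card_of_injective _ Subtype.val_injective
  have hne : {m | ∃ G : SimpleGraph (Fin n), FFree F G ∧ eCnt G = m}.Nonempty :=
    ⟨eCnt G0, G0, h0, rfl⟩
  obtain ⟨G', hG', hc⟩ := Nat.sSup_mem hne hbdd
  exact ⟨G', hG', hc⟩

theorem stmt_7 {W : Type*} (r a : ℕ) (hr : 2 ≤ r) (F : SimpleGraph W) (h : HypStar r a F) :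
    ∃ n₀ : ℕ, ∀ n ≥ n₀, ∀ G : SimpleGraph (Fin n), SpecExtremal F G →
      (1 - 1 / (r : ℝ)) * n - r / (4 * n) + 2 * a / n ≤ specRad G := by
  classical
  obtain ⟨m₀, hm₀⟩ := h
  refine ⟨max m₀ 1, fun n hn G hG => ?_⟩
  have hn1 : 0 < n := le_trans (le_max_right m₀ 1) hn
  have hrpos : 0 < r := by omega
  obtain ⟨hex, -⟩ := hm₀ n (le_trans (le_max_left m₀ 1) hn)
  obtain ⟨G', hfree', hcnt'⟩ := exNum_attained F G hG.1
  rw [hex] at hcnt'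
  -- edge count of G'
  have hturan : eCnt (turanGraph n r) = (turanGraph n r).edgeFinset.card := eCnt_eq _
  have hedge := turan_edges n r hrpos
  have hbound := cnt_sq_bound n r hrpos
  have hn0 : (0 : ℝ) < n := by exact_mod_cast hn1
  have hr0 : (0 : ℝ) < r := by exact_mod_cast hrpos
  have hcast : 2 * ((turanGraph n r).edgeFinset.card : ℝ) +
      (∑ s ∈ Finset.range r, ((cnt n r s : ℝ)) ^ 2) = (n : ℝ) ^ 2 := by
    exact_mod_cast hedge
  have key : (n : ℝ) ^ 2 - (n : ℝ) ^ 2 / r - r / 4 + 2 * a ≤ 2 * (eCnt G' : ℝ) := by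
    have : (eCnt G' : ℝ) = ((turanGraph n r).edgeFinset.card : ℝ) + a := by
      rw [hcnt', hturan]; push_cast; ring
    rw [this]
    linarith
  have lhs_eq : (1 - 1 / (r : ℝ)) * n - r / (4 * n) + 2 * a / n =
      ((n : ℝ) ^ 2 - (n : ℝ) ^ 2 / r - r / 4 + 2 * a) / n := by
    field_simp
  rw [lhs_eq]
  calc ((n : ℝ) ^ 2 - (n : ℝ) ^ 2 / r - r / 4 + 2 * a) / n
      ≤ (2 * (eCnt G' : ℝ)) / n := by
        exact (div_le_div_iff_of_pos_right hn0).mpr key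
    _ ≤ specRad G' := rayleigh_lb hn1 G'
    _ ≤ specRad G := hG.2 G' hfree'
end

section
/- Let r ≥ 2 and n ≥ r, and let y be a nonnegative eigenvector of the adjacency matrix of the Turán graph T_{n,r} corresponding to the eigenvalue λ(T_{n,r}), normalized so that its maximum entry equals 1. Then every entry of y is at least 1 − 1/n. -/
open SimpleGraph

theorem count_mod (n r i : ℕ) (hr : 0 < r) (hi : i < r) (hin : i < n) :
    ((Finset.range n).filter (fun x => x % r = i)).card = (n - 1 - i)/r + 1 := by
  rw [← Finset.card_range ((n - 1 - i)/r + 1)]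
  apply Finset.card_bij' (fun x _ => x / r) (fun k _ => i + r * k)
  · intro x hx
    rw [Finset.mem_filter, Finset.mem_range] at hx
    rw [Finset.mem_range, Nat.lt_succ_iff]
    have hmd := Nat.mod_add_div x r
    have h1 : r * (x / r) = x - i := by omega
    have : x - i ≤ n - 1 - i := by omega
    calc x / r = (x - i) / r := by rw [← h1, Nat.mul_div_cancel_left _ hr]
    _ ≤ (n - 1 - i) / r := Nat.div_le_div_right this
  · intro k hk
    rw [Finset.mem_range, Nat.lt_succ_iff] at hk
    rw [Finset.mem_filter, Finset.mem_range]
    have h2 : r * ((n-1-i)/r) ≤ n - 1 - i := Nat.mul_div_le _ _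
    have := Nat.mul_le_mul_left r hk
    constructor
    · omega
    · simp [Nat.add_mul_mod_self_left, Nat.mod_eq_of_lt hi]
  · intro x hx
    rw [Finset.mem_filter] at hx
    have hmd := Nat.mod_add_div x r
    omega
  · intro k hk
    rw [Finset.mem_range] at hk
    rw [Nat.add_mul_div_left _ _ hr, Nat.div_eq_of_lt hi]; omega

open Matrix in
theorem stmt_17 (r n : ℕ) (hr : 2 ≤ r) (hn : r ≤ n) (y : Fin n → ℝ)
    (hy : ∀ v, 0 ≤ y v)
    (heig : adjMat (turanGraph n r) *ᵥ y = specRad (turanGraph n r) • y)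
    (hle : ∀ v, y v ≤ 1) (hmax : ∃ v, y v = 1) :
    ∀ v, 1 - 1 / (n : ℝ) ≤ y v := by
  intro v
  obtain ⟨v₀, hv₀⟩ := hmax
  have hr0 : 0 < r := by omega
  have hn2 : 2 ≤ n := le_trans hr hn
  have hn0 : (0:ℝ) < n := by exact_mod_cast Nat.lt_of_lt_of_le Nat.zero_lt_two hn2
  set l := specRad (turanGraph n r) with hldef
  set Q : Fin n → Finset (Fin n) :=
    fun w => Finset.univ.filter (fun u : Fin n => ¬ ((u:ℕ) % r = (w:ℕ) % r)) with hQ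
  set P : Fin n → Finset (Fin n) :=
    fun w => Finset.univ.filter (fun u : Fin n => (u:ℕ) % r = (w:ℕ) % r) with hP
  set p : Fin n → ℕ := fun w => (P w).card with hpdef
  set S : ℝ := ∑ u, y u with hSdef
  -- adjacency matrix entries
  have hAdj : ∀ w u : Fin n, adjMat (turanGraph n r) w u
      = if (w:ℕ) % r ≠ (u:ℕ) % r then 1 else 0 := by
    intro w u
    rw [adjMat]
    rw [SimpleGraph.adjMatrix_apply]
    split_ifs with h1 h2 h2
    · rfl
    · exact absurd h1 h2
    · exact absurd h2 h1
    · rfl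
  -- eigen equation pointwise
  have hL : ∀ w, l * y w = ∑ u ∈ Q w, y u := by
    intro w
    have h1 := congrFun heig w
    rw [Pi.smul_apply, smul_eq_mul] at h1
    rw [← h1, mulVec, dotProduct, hQ]
    rw [Finset.sum_filter]
    apply Finset.sum_congr rfl
    intro u _
    rw [hAdj w u]
    by_cases h : (u:ℕ) % r = (w:ℕ) % r
    · rw [if_neg (fun hc => hc h.symm), if_neg (not_not_intro h), zero_mul]
    · rw [if_pos (fun hc => h hc.symm), if_pos h, one_mul]
  have hPQ : ∀ w, (∑ u ∈ P w, y u) + (∑ u ∈ Q w, y u) = S := by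
    intro w
    rw [hSdef, hP, hQ]
    exact Finset.sum_filter_add_sum_filter_not _ _ _
  -- l ≥ 1
  have hl0 : 0 ≤ l := by
    have := hL v₀
    rw [hv₀, mul_one] at this
    rw [this]
    exact Finset.sum_nonneg fun u _ => hy u
  have hl1 : 1 ≤ l := by
    obtain ⟨w, hw⟩ : ∃ w : Fin n, (w:ℕ) % r ≠ (v₀:ℕ) % r := by
      by_cases h0 : (v₀:ℕ) % r = 0
      · exact ⟨⟨1, by omega⟩, by simp [Nat.mod_eq_of_lt (by omega : 1 < r), h0]⟩
      · exact ⟨⟨0, by omega⟩, by simp [h0]; omega⟩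
    have hmem : v₀ ∈ Q w := by
      rw [hQ]; simp only [Finset.mem_filter, Finset.mem_univ, true_and]
      exact fun hc => hw hc.symm
    have h1 : 1 ≤ ∑ u ∈ Q w, y u := by
      rw [← hv₀]
      exact Finset.single_le_sum (fun u _ => hy u) hmem
    have h2 : l * y w ≤ l := mul_le_of_le_one_right hl0 (hle w)
    linarith [hL w]
  have hlpos : 0 < l := lt_of_lt_of_le one_pos hl1
  -- entries equal within a part
  have hsame : ∀ w w' : Fin n, (w:ℕ) % r = (w':ℕ) % r → y w = y w' := by
    intro w w' h
    have hQeq : Q w = Q w' := by simp only [hQ, h]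
    have h1 := hL w
    have h2 := hL w'
    rw [hQeq] at h1
    exact mul_left_cancel₀ (ne_of_gt hlpos) (h1.trans h2.symm)
  -- key equation
  have hkey : ∀ w, (l + (p w : ℝ)) * y w = S := by
    intro w
    have hPs : ∑ u ∈ P w, y u = (p w : ℝ) * y w := by
      rw [hpdef]
      rw [Finset.sum_congr rfl (fun u hu => hsame u w (by
        rw [hP] at hu; exact (Finset.mem_filter.mp hu).2))]
      rw [Finset.sum_const, nsmul_eq_mul]
    have := hPQ w
    rw [hPs, ← hL w] at this
    linarith
  have hS1 : 1 ≤ S := by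
    rw [hSdef, ← hv₀]
    exact Finset.single_le_sum (fun u _ => hy u) (Finset.mem_univ v₀)
  have hpn : ∀ w, p w ≤ n := by
    intro w
    rw [hpdef]
    calc (P w).card ≤ Finset.univ.card := Finset.card_le_card (Finset.filter_subset _ _)
    _ = n := by simp
  have hppos : ∀ w, (0:ℝ) < l + (p w : ℝ) := by
    intro w; positivity
  have hypos : ∀ w, 0 < y w := by
    intro w
    by_contra h
    push_neg at h
    have := hkey w
    nlinarith [hppos w]
  -- p formula and difference bound
  have hpform : ∀ w : Fin n, p w = (n - 1 - (w:ℕ) % r) / r + 1 := by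
    intro w
    have hir : (w:ℕ) % r < r := Nat.mod_lt _ hr0
    rw [← count_mod n r ((w:ℕ) % r) hr0 hir (lt_of_lt_of_le hir hn), hpdef, hP]
    apply Finset.card_bij (fun (x : Fin n) _ => (x:ℕ))
    · intro a ha
      rw [Finset.mem_filter] at ha ⊢
      rw [Finset.mem_range]
      exact ⟨a.isLt, ha.2⟩
    · intro a _ b _ h
      exact Fin.val_injective h
    · intro x hx
      rw [Finset.mem_filter, Finset.mem_range] at hx
      exact ⟨⟨x, hx.1⟩, Finset.mem_filter.mpr ⟨Finset.mem_univ _, hx.2⟩, rfl⟩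
  have hpdiff : ∀ w w' : Fin n, p w ≤ p w' + 1 := by
    intro w w'
    rw [hpform w, hpform w']
    have h1 : n - 1 - (w:ℕ) % r ≤ (n - 1 - (w':ℕ) % r) + r := by
      have := Nat.mod_lt (w':ℕ) hr0
      omega
    have := Nat.div_le_div_right (c := r) h1
    rw [Nat.add_div_right _ hr0] at this
    omega
  -- the maximum part
  obtain ⟨u₀, _, hu₀⟩ := Finset.exists_max_image Finset.univ p ⟨v₀, Finset.mem_univ v₀⟩
  -- lower bound on l
  have hlge : (n:ℝ) - (p u₀ : ℝ) ≤ l := by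
    have hQP : Q u₀ = (P u₀)ᶜ := by
      ext u; simp [hQ, hP]
    have hcard : (Q u₀).card = n - p u₀ := by
      rw [hQP, Finset.card_compl, Fintype.card_fin]
    have hmin : ∀ u ∈ Q u₀, y u₀ ≤ y u := by
      intro u _
      have h1 := hkey u
      have h2 := hkey u₀
      have hple : (p u : ℝ) ≤ (p u₀ : ℝ) := by
        exact_mod_cast hu₀ u (Finset.mem_univ u)
      nlinarith [hypos u, hypos u₀, hppos u, hppos u₀]
    have hsum : ((Q u₀).card : ℝ) * y u₀ ≤ ∑ u ∈ Q u₀, y u := by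
      have := Finset.card_nsmul_le_sum (Q u₀) y (y u₀) hmin
      rwa [nsmul_eq_mul] at this
    rw [hcard] at hsum
    have hc : ((n - p u₀ : ℕ) : ℝ) = (n:ℝ) - (p u₀ : ℝ) := by
      have := hpn u₀
      push_cast [Nat.cast_sub this]
      ring
    rw [hc, ← hL u₀] at hsum
    have := hypos u₀
    nlinarith
  -- finish
  have hkv := hkey v
  have hkv₀ := hkey v₀
  rw [hv₀, mul_one] at hkv₀
  by_cases hcase : p v ≤ p v₀
  · have hcast : (p v : ℝ) ≤ (p v₀ : ℝ) := by exact_mod_cast hcase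
    have hyv1 : 1 ≤ y v := by nlinarith [hppos v]
    have : (0:ℝ) ≤ 1 / n := by positivity
    linarith
  · have hpv : p v = p v₀ + 1 := by
      have := hpdiff v v₀; omega
    have hpu : p u₀ = p v := by
      have h1 := hu₀ v (Finset.mem_univ v)
      have h2 := hpdiff u₀ v₀
      omega
    rw [← hpu] at hkv
    have hcast : (p u₀ : ℝ) = (p v₀ : ℝ) + 1 := by
      rw [hpu, hpv]; push_cast; ring
    -- (l + p u₀) * y v = l + p v₀ = l + p u₀ - 1,  l + p u₀ ≥ n
    have h3 : (l + (p u₀ : ℝ)) * y v = l + (p u₀ : ℝ) - 1 := by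
      rw [hkv, ← hkv₀, hcast]; ring
    have h2 : (n:ℝ) ≤ l + (p u₀ : ℝ) := by linarith
    have h1 : (0:ℝ) < l + (p u₀ : ℝ) := hppos u₀
    have hinv : (1/(n:ℝ)) * n = 1 := by field_simp
    have hinvpos : (0:ℝ) < 1/n := by positivity
    nlinarith [mul_le_mul_of_nonneg_left h2 (le_of_lt hinvpos)]
end

section
/- Let r ≥ 2 be an integer and let F be a graph satisfying Hypothesis (★) with constant a. Then for all sufficiently large n, every graph H ∈ Ex(n,F) satisfies λ(H) ≥ λ(T_{n,r}) + (2a/n)·(1 − 2/n). -/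
open SimpleGraph Matrix Finset
open scoped RealInnerProductSpace

open scoped Classical in
lemma adjMat_apply {V : Type*} [Fintype V] (G : SimpleGraph V) (i j : V) :
    adjMat G i j = if G.Adj i j then 1 else 0 := by
  unfold adjMat
  rw [SimpleGraph.adjMatrix_apply]

lemma adjMat_nonneg {V : Type*} [Fintype V] (G : SimpleGraph V) (i j : V) :
    0 ≤ adjMat G i j := by
  classical
  rw [adjMat_apply]; split <;> norm_num

lemma adjMat_herm {n : ℕ} (G : SimpleGraph (Fin n)) : (adjMat G).IsHermitian := by
  unfold Matrix.IsHermitian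
  ext i j
  classical
  simp only [Matrix.conjTranspose_apply, adjMat_apply, star_trivial]
  rw [SimpleGraph.adj_comm]

lemma adjMat_transpose {n : ℕ} (G : SimpleGraph (Fin n)) : (adjMat G)ᵀ = adjMat G := by
  ext i j
  classical
  simp only [Matrix.transpose_apply, adjMat_apply]
  rw [SimpleGraph.adj_comm]

lemma exists_eigvec {n : ℕ} (A : Matrix (Fin n) (Fin n) ℝ) {μ : ℝ} (hμ : μ ∈ spectrum ℝ A) :
    ∃ v : Fin n → ℝ, v ≠ 0 ∧ A.mulVec v = μ • v := by
  rw [spectrum.mem_iff, Matrix.isUnit_iff_isUnit_det, isUnit_iff_ne_zero, not_not] at hμ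
  obtain ⟨v, hv0, hv⟩ := (Matrix.exists_mulVec_eq_zero_iff).2 hμ
  refine ⟨v, hv0, ?_⟩
  rw [Matrix.sub_mulVec, sub_eq_zero, Algebra.algebraMap_eq_smul_one, Matrix.smul_mulVec,
    Matrix.one_mulVec] at hv
  exact hv.symm

lemma rayleigh_le {n : ℕ} (A : Matrix (Fin n) (Fin n) ℝ) (hA : A.IsHermitian)
    {mu : ℝ} (hmax : ∀ i, hA.eigenvalues i ≤ mu) (x : Fin n → ℝ) :
    x ⬝ᵥ (A *ᵥ x) ≤ mu * (x ⬝ᵥ x) := by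
  have hsym : (Matrix.toEuclideanLin A).IsSymmetric :=
    (Matrix.isHermitian_iff_isSymmetric).1 hA
  set X : EuclideanSpace ℝ (Fin n) := (WithLp.equiv 2 (Fin n → ℝ)).symm x with hX
  set B := hA.eigenvectorBasis with hB
  have hTB : ∀ i, Matrix.toEuclideanLin A (B i) = hA.eigenvalues i • (B i) := by
    intro i
    apply (WithLp.equiv 2 (Fin n → ℝ)).injective
    simpa [Matrix.toEuclideanLin_apply] using hA.mulVec_eigenvectorBasis i
  have hdot1 : ⟪X, Matrix.toEuclideanLin A X⟫ = x ⬝ᵥ (A *ᵥ x) := by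
    simp [Matrix.toEuclideanLin_apply, PiLp.inner_apply, RCLike.inner_apply, dotProduct,
      hX, mul_comm]
  have hdot2 : ⟪X, X⟫ = x ⬝ᵥ x := by
    rw [hX, EuclideanSpace.inner_eq_star_dotProduct]; simp
  rw [← hdot1, ← hdot2]
  rw [← B.sum_inner_mul_inner X (Matrix.toEuclideanLin A X), ← B.sum_inner_mul_inner X X]
  rw [Finset.mul_sum]
  apply Finset.sum_le_sum
  intro i _
  have h1 : ⟪B i, Matrix.toEuclideanLin A X⟫ = hA.eigenvalues i * ⟪B i, X⟫ := by
    rw [← hsym (B i) X, hTB i, inner_smul_left]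
    simp
  have h2 : ⟪B i, X⟫ = ⟪X, B i⟫ := real_inner_comm _ _
  rw [h1, h2]
  nlinarith [hmax i, mul_self_nonneg (⟪X, B i⟫ : ℝ)]

lemma specRad_upper {n : ℕ} (G : SimpleGraph (Fin n)) (lam : ℝ) (hlam : 0 ≤ lam)
    (y : Fin n → ℝ) (hy : ∀ i, 0 < y i) (heig : adjMat G *ᵥ y = lam • y) :
    specRad G ≤ lam := by
  apply Real.sSup_le _ hlam
  intro μ hμ
  obtain ⟨v, hv0, hv⟩ := exists_eigvec _ hμ
  set z : Fin n → ℝ := fun i => |v i| with hzdef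
  have key : ∀ i, |μ| * z i ≤ (adjMat G *ᵥ z) i := by
    intro i
    have h1 : (adjMat G *ᵥ v) i = μ * v i := by rw [hv]; simp
    have h2 : |μ| * z i = |(adjMat G *ᵥ v) i| := by
      rw [h1, abs_mul]
    rw [h2]
    calc |(adjMat G *ᵥ v) i| ≤ ∑ j, |adjMat G i j * v j| := by
          simpa [Matrix.mulVec, dotProduct] using
            Finset.abs_sum_le_sum_abs (fun j => adjMat G i j * v j) Finset.univ
      _ = (adjMat G *ᵥ z) i := by
          simp only [Matrix.mulVec, dotProduct, hzdef]
          refine Finset.sum_congr rfl fun j _ => ?_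
          rw [abs_mul, abs_of_nonneg (adjMat_nonneg G i j)]
  have hSpos : 0 < y ⬝ᵥ z := by
    obtain ⟨i, hi⟩ := Function.ne_iff.mp hv0
    have : 0 < y i * z i := mul_pos (hy i) (by simpa [hzdef] using abs_pos.mpr hi)
    apply Finset.sum_pos' (fun j _ => mul_nonneg (hy j).le (abs_nonneg _)) ⟨i, Finset.mem_univ i, this⟩
  have hchain : |μ| * (y ⬝ᵥ z) ≤ lam * (y ⬝ᵥ z) := by
    calc |μ| * (y ⬝ᵥ z) = ∑ i, y i * (|μ| * z i) := by
          simp [dotProduct, Finset.mul_sum]; ring_nf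
      _ ≤ ∑ i, y i * (adjMat G *ᵥ z) i :=
          Finset.sum_le_sum fun i _ => mul_le_mul_of_nonneg_left (key i) (hy i).le
      _ = y ⬝ᵥ (adjMat G *ᵥ z) := rfl
      _ = (adjMat G *ᵥ y) ⬝ᵥ z := by
          rw [Matrix.dotProduct_mulVec, ← Matrix.mulVec_transpose, adjMat_transpose]
      _ = lam * (y ⬝ᵥ z) := by rw [heig]; simp [smul_dotProduct]
  have : |μ| ≤ lam := le_of_mul_le_mul_right (by linarith [hchain]) hSpos
  exact (le_abs_self μ).trans this

lemma dotProduct_self_nonneg' {n : ℕ} (x : Fin n → ℝ) : 0 ≤ x ⬝ᵥ x :=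
  Finset.sum_nonneg fun i _ => mul_self_nonneg (x i)

lemma specRad_lower {n : ℕ} (hn : 0 < n) (G : SimpleGraph (Fin n)) (x : Fin n → ℝ) :
    x ⬝ᵥ (adjMat G *ᵥ x) ≤ specRad G * (x ⬝ᵥ x) := by
  have : Nonempty (Fin n) := Fin.pos_iff_nonempty.mp hn
  have hA := adjMat_herm G
  obtain ⟨j, hj⟩ := Finite.exists_max hA.eigenvalues
  have h1 := rayleigh_le (adjMat G) hA hj x
  have h2 : hA.eigenvalues j ≤ specRad G :=
    le_csSup ((adjMat G).finite_spectrum.bddAbove) (hA.eigenvalues_mem_spectrum_real j)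
  calc x ⬝ᵥ (adjMat G *ᵥ x) ≤ hA.eigenvalues j * (x ⬝ᵥ x) := h1
    _ ≤ specRad G * (x ⬝ᵥ x) := mul_le_mul_of_nonneg_right h2 (dotProduct_self_nonneg' x)


def cls (n r k : ℕ) : Finset (Fin n) := Finset.univ.filter (fun u : Fin n => (u : ℕ) % r = k)

lemma cls_card_low {n r : ℕ} (hr : 0 < r) {k : ℕ} (hk : k < r) : n / r ≤ (cls n r k).card := by
  rcases Nat.eq_zero_or_pos (n / r) with h | h
  · simp [h]
  have hn : 0 < n := by
    rcases Nat.eq_zero_or_pos n with h0 | h0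
    · simp [h0] at h
    · exact h0
  have hbound : ∀ j ∈ Finset.range (n / r), k + r * j < n := by
    intro j hj
    rw [Finset.mem_range] at hj
    have h1 : r * (j + 1) ≤ r * (n / r) := Nat.mul_le_mul_left r hj
    have h2 : r * (n / r) ≤ n := Nat.mul_div_le n r
    have : r * j + r ≤ n := by rw [Nat.mul_succ] at h1; omega
    omega
  have := Finset.card_le_card_of_injOn
    (s := Finset.range (n / r)) (t := cls n r k)
    (fun j => (⟨(k + r * j) % n, Nat.mod_lt _ hn⟩ : Fin n))
    (fun j hj => by
      have hb := hbound j hj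
      simp only [cls, Finset.mem_coe, Finset.mem_filter, Finset.mem_univ, true_and]
      show (k + r * j) % n % r = k
      rw [Nat.mod_eq_of_lt hb]
      simp [Nat.add_mul_mod_self_left, Nat.mod_eq_of_lt hk])
    (fun i hi j hj hij => by
      have hbi := hbound i hi
      have hbj := hbound j hj
      have : (k + r * i) % n = (k + r * j) % n := congrArg Fin.val hij
      rw [Nat.mod_eq_of_lt hbi, Nat.mod_eq_of_lt hbj] at this
      have := Nat.eq_of_mul_eq_mul_left hr (by omega : r * i = r * j)
      exact this)
  simpa using this

lemma cls_card_high {n r : ℕ} (hr : 0 < r) (k : ℕ) : (cls n r k).card ≤ n / r + 1 := by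
  have := Finset.card_le_card_of_injOn (fun u : Fin n => (u : ℕ) / r)
    (s := cls n r k) (t := Finset.range (n / r + 1))
    (fun u hu => by
      simp only [Finset.mem_coe, Finset.mem_range]
      exact Nat.lt_succ_of_le (Nat.div_le_div_right u.isLt.le))
    (fun u hu v hv huv => by
      have huv' : (u : ℕ) / r = (v : ℕ) / r := huv
      simp only [cls, Finset.mem_coe, Finset.mem_filter] at hu hv
      have h1 : (u : ℕ) = r * ((u:ℕ)/r) + (u:ℕ) % r := (Nat.div_add_mod _ _).symm
      have h2 : (v : ℕ) = r * ((v:ℕ)/r) + (v:ℕ) % r := (Nat.div_add_mod _ _).symm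
      apply Fin.ext
      rw [h1, h2, huv', hu.2, hv.2])
  simpa using this

lemma cls_mem {n r : ℕ} (hr : 0 < r) {k : ℕ} (hk : k < r) :
    (cls n r k).card = n / r ∨ (cls n r k).card = n / r + 1 := by
  have h1 := cls_card_low (n := n) hr hk
  have h2 := cls_card_high (n := n) hr k
  omega

lemma cls_sum {n r : ℕ} (hr : 0 < r) :
    ∑ k ∈ Finset.range r, (cls n r k).card = n := by
  have := Finset.card_eq_sum_card_fiberwise
    (f := fun u : Fin n => (u : ℕ) % r) (s := Finset.univ) (t := Finset.range r)
    (fun u _ => Finset.mem_range.mpr (Nat.mod_lt _ hr))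
  simpa [cls] using this.symm

lemma sum_fib {n r : ℕ} (hr : 0 < r) (f : ℕ → ℝ) :
    ∑ u : Fin n, f ((u : ℕ) % r) = ∑ k ∈ Finset.range r, ((cls n r k).card : ℝ) * f k := by
  rw [← Finset.sum_fiberwise_of_maps_to
    (g := fun u : Fin n => (u : ℕ) % r) (t := Finset.range r)
    (fun u _ => Finset.mem_range.mpr (Nat.mod_lt _ hr)) (fun u => f ((u : ℕ) % r))]
  refine Finset.sum_congr rfl fun k hk => ?_
  rw [Finset.sum_congr rfl (fun u hu => ?_), Finset.sum_const, nsmul_eq_mul]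
  · rfl
  · simp only [Finset.mem_filter] at hu
    rw [hu.2]

noncomputable def tLam (n r : ℕ) : ℝ :=
  ((n : ℝ) - 2 * (n / r : ℕ) - 1 +
    Real.sqrt (((n : ℝ) - 2 * (n / r : ℕ) - 1) ^ 2 +
      4 * ((r : ℝ) - 1) * (n / r : ℕ) * ((n / r : ℕ) + 1))) / 2

noncomputable def tVec (n r : ℕ) : Fin n → ℝ := fun u =>
  tLam n r + 2 * ((n / r : ℕ) : ℝ) + 1 - ((cls n r ((u : ℕ) % r)).card : ℝ)

lemma tLam_root {n r : ℕ} (hr : 1 ≤ r) :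
    (tLam n r) ^ 2 = ((n : ℝ) - 2 * (n / r : ℕ) - 1) * tLam n r
      + ((r : ℝ) - 1) * (n / r : ℕ) * ((n / r : ℕ) + 1) := by
  set p : ℝ := ((n / r : ℕ) : ℝ)
  set b : ℝ := (n : ℝ) - 2 * p - 1
  have h1 : (1:ℝ) ≤ (r:ℝ) := by exact_mod_cast hr
  have h2 : (0:ℝ) ≤ p := by positivity
  have hc : (0:ℝ) ≤ ((r : ℝ) - 1) * p * (p + 1) := by
    apply mul_nonneg (mul_nonneg (by linarith) h2) (by linarith)
  have harg : (0:ℝ) ≤ b ^ 2 + 4 * ((r : ℝ) - 1) * p * (p + 1) := by nlinarith [sq_nonneg b]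
  have hs := Real.sq_sqrt harg
  unfold tLam
  set s := Real.sqrt (b ^ 2 + 4 * ((r : ℝ) - 1) * p * (p + 1)) with hsdef
  show ((b + s) / 2) ^ 2 = b * ((b + s) / 2) + ((r:ℝ) - 1) * p * (p + 1)
  linear_combination hs / 4

lemma tLam_ge {n r : ℕ} (hr : 1 ≤ r) : (n : ℝ) - (n / r : ℕ) - 1 ≤ tLam n r := by
  have hr0 : 0 < r := hr
  set p : ℝ := ((n / r : ℕ) : ℝ) with hp
  set b : ℝ := (n : ℝ) - 2 * p - 1 with hb
  have h1 : (1:ℝ) ≤ (r:ℝ) := by exact_mod_cast hr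
  have hp0 : (0:ℝ) ≤ p := by positivity
  have h3 : n < r * (n / r) + r := by
    conv_lhs => rw [← Nat.div_add_mod n r]
    exact Nat.add_lt_add_left (Nat.mod_lt n hr0) _
  have hlt : (n : ℝ) + 1 ≤ (r : ℝ) * p + r := by
    rw [hp]; exact_mod_cast Nat.succ_le_of_lt h3
  have h5 : (0:ℝ) ≤ (r:ℝ) * p + r - n := by linarith
  have h4 : ((n:ℝ) - 1)^2 ≤ b ^ 2 + 4 * ((r : ℝ) - 1) * p * (p + 1) := by
    nlinarith [mul_nonneg hp0 h5]
  have hs_ge : (n:ℝ) - 1 ≤ Real.sqrt (b ^ 2 + 4 * ((r : ℝ) - 1) * p * (p + 1)) := by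
    calc (n:ℝ) - 1 ≤ |(n:ℝ) - 1| := le_abs_self _
      _ = Real.sqrt (((n:ℝ) - 1)^2) := (Real.sqrt_sq_eq_abs _).symm
      _ ≤ _ := Real.sqrt_le_sqrt h4
  unfold tLam
  show (n : ℝ) - p - 1 ≤ (b + _) / 2
  linarith

lemma tVec_lb {n r : ℕ} (hr : 0 < r) (u : Fin n) :
    tLam n r + ((n / r : ℕ) : ℝ) ≤ tVec n r u := by
  have hk : (u : ℕ) % r < r := Nat.mod_lt _ hr
  rcases cls_mem (n := n) hr hk with h | h <;> unfold tVec <;> rw [h] <;> push_cast <;> linarith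

lemma tVec_ub {n r : ℕ} (hr : 0 < r) (u : Fin n) :
    tVec n r u ≤ tLam n r + ((n / r : ℕ) : ℝ) + 1 := by
  have hk : (u : ℕ) % r < r := Nat.mod_lt _ hr
  rcases cls_mem (n := n) hr hk with h | h <;> unfold tVec <;> rw [h] <;> push_cast <;> linarith

lemma tVec_eigen {n r : ℕ} (hr : 0 < r) :
    adjMat (turanGraph n r) *ᵥ tVec n r = tLam n r • tVec n r := by
  classical
  have hr1 : 1 ≤ r := hr
  funext u
  set p : ℝ := ((n / r : ℕ) : ℝ) with hp
  have key : ∀ k, k < r → ((cls n r k).card : ℝ) = p ∨ ((cls n r k).card : ℝ) = p + 1 := by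
    intro k hk
    rcases cls_mem (n := n) hr hk with h | h <;> rw [h] <;> push_cast <;> [left; right] <;> ring
  have hcsum : ∑ k ∈ Finset.range r, ((cls n r k).card : ℝ) = (n : ℝ) := by
    exact_mod_cast congrArg (Nat.cast : ℕ → ℝ) (cls_sum (n := n) hr)
  have hsq : ∀ k ∈ Finset.range r, ((cls n r k).card : ℝ) * ((cls n r k).card : ℝ)
      = (2 * p + 1) * ((cls n r k).card : ℝ) - p * (p + 1) := by
    intro k hk
    rcases key k (Finset.mem_range.mp hk) with h | h <;> rw [h] <;> ring
  have hS : ∑ w : Fin n, tVec n r w = (n : ℝ) * tLam n r + (r : ℝ) * p * (p + 1) := by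
    unfold tVec
    rw [Finset.sum_sub_distrib, Finset.sum_const,
      sum_fib hr (fun k => ((cls n r k).card : ℝ))]
    rw [Finset.sum_congr rfl hsq, Finset.sum_sub_distrib, ← Finset.mul_sum, hcsum,
      Finset.sum_const, Finset.card_range, nsmul_eq_mul, Finset.card_univ, Fintype.card_fin,
      nsmul_eq_mul]
    ring
  have hMV : (adjMat (turanGraph n r) *ᵥ tVec n r) u
      = (∑ w : Fin n, tVec n r w) - ((cls n r ((u : ℕ) % r)).card : ℝ) * tVec n r u := by
    have hterm : ∀ w : Fin n, adjMat (turanGraph n r) u w * tVec n r w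
        = tVec n r w - (if (w : ℕ) % r = (u : ℕ) % r then (1:ℝ) else 0) * tVec n r w := by
      intro w
      by_cases hw : (u : ℕ) % r = (w : ℕ) % r
      · have hna : ¬ (turanGraph n r).Adj u w := by
          show ¬ ((u : ℕ) % r ≠ (w : ℕ) % r); simp [hw]
        rw [adjMat_apply, if_neg hna, if_pos hw.symm]
        ring
      · have ha : (turanGraph n r).Adj u w := hw
        rw [adjMat_apply, if_pos ha, if_neg (fun hc => hw hc.symm)]
        ring
    show ∑ w : Fin n, adjMat (turanGraph n r) u w * tVec n r w = _
    rw [Finset.sum_congr rfl (fun w _ => hterm w), Finset.sum_sub_distrib]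
    congr 1
    rw [Finset.sum_congr rfl (fun (w : Fin n) _ => (by split <;> ring :
        (if (w : ℕ) % r = (u : ℕ) % r then (1:ℝ) else 0) * tVec n r w
          = if (w : ℕ) % r = (u : ℕ) % r then tVec n r w else 0)),
      ← Finset.sum_filter]
    have hval : ∀ w ∈ Finset.univ.filter (fun w : Fin n => (w : ℕ) % r = (u : ℕ) % r),
        tVec n r w = tVec n r u := by
      intro w hw
      have hw2 : (w : ℕ) % r = (u : ℕ) % r := (Finset.mem_filter.mp hw).2
      unfold tVec; rw [hw2]
    rw [Finset.sum_congr rfl hval, Finset.sum_const, nsmul_eq_mul]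
    rfl
  rw [Pi.smul_apply, smul_eq_mul, hMV, hS]
  have hroot := tLam_root (n := n) hr1
  have hku : (u : ℕ) % r < r := Nat.mod_lt _ hr
  have hyu : tVec n r u = tLam n r + 2 * p + 1 - ((cls n r ((u : ℕ) % r)).card : ℝ) := rfl
  rcases key _ hku with h | h <;> rw [hyu, h] <;> rw [hp] at * <;> linear_combination (-1 : ℝ) * hroot

lemma sum_adjMat {n : ℕ} (G : SimpleGraph (Fin n)) :
    ∑ i : Fin n, ∑ j : Fin n, adjMat G i j = 2 * (eCnt G : ℝ) := by
  classical
  have hdeg : ∀ i : Fin n, ∑ j : Fin n, adjMat G i j = (G.degree i : ℝ) := by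
    intro i
    rw [SimpleGraph.degree, SimpleGraph.neighborFinset_eq_filter]
    rw [Finset.sum_congr rfl (fun j _ => adjMat_apply G i j)]
    simp [Finset.sum_boole]
  rw [Finset.sum_congr rfl (fun i _ => hdeg i)]
  have h2 := SimpleGraph.sum_degrees_eq_twice_card_edges G
  have h3 : eCnt G = G.edgeFinset.card := by
    rw [eCnt, Nat.card_eq_fintype_card, SimpleGraph.edgeFinset_card]
  rw [h3]
  exact_mod_cast congrArg (Nat.cast : ℕ → ℝ) h2

lemma quad_expand {n : ℕ} (G : SimpleGraph (Fin n)) (x : Fin n → ℝ) :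
    x ⬝ᵥ (adjMat G *ᵥ x) = ∑ i : Fin n, ∑ j : Fin n, adjMat G i j * (x i * x j) := by
  simp only [dotProduct, Matrix.mulVec, Finset.mul_sum]
  refine Finset.sum_congr rfl fun i _ => Finset.sum_congr rfl fun j _ => by ring

lemma quad_ineq {n : ℕ} (H' H : SimpleGraph (Fin n)) (hle : H' ≤ H) (x : Fin n → ℝ) (b : ℝ)
    (hb : 0 ≤ b) (hx : ∀ i, b ≤ x i) :
    x ⬝ᵥ (adjMat H' *ᵥ x) + b ^ 2 * (2 * (eCnt H : ℝ) - 2 * (eCnt H' : ℝ))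
      ≤ x ⬝ᵥ (adjMat H *ᵥ x) := by
  classical
  have hpair : ∀ i j : Fin n, adjMat H' i j * (x i * x j)
      + (adjMat H i j - adjMat H' i j) * b ^ 2 ≤ adjMat H i j * (x i * x j) := by
    intro i j
    have hbb : b ^ 2 ≤ x i * x j := by
      have := mul_le_mul (hx i) (hx j) hb (hb.trans (hx i))
      nlinarith
    by_cases h1 : H'.Adj i j
    · have h2 : H.Adj i j := hle h1
      rw [adjMat_apply, adjMat_apply, if_pos h1, if_pos h2]
      ring_nf
      rfl
    · by_cases h2 : H.Adj i j
      · rw [adjMat_apply, adjMat_apply, if_neg h1, if_pos h2]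
        nlinarith
      · rw [adjMat_apply, adjMat_apply, if_neg h1, if_neg h2]
        ring_nf
        rfl
  have hsum : ∑ i : Fin n, ∑ j : Fin n, (adjMat H' i j * (x i * x j)
      + (adjMat H i j - adjMat H' i j) * b ^ 2)
      ≤ ∑ i : Fin n, ∑ j : Fin n, adjMat H i j * (x i * x j) :=
    Finset.sum_le_sum fun i _ => Finset.sum_le_sum fun j _ => hpair i j
  have hre : ∑ i : Fin n, ∑ j : Fin n, (adjMat H' i j * (x i * x j)
      + (adjMat H i j - adjMat H' i j) * b ^ 2)
      = x ⬝ᵥ (adjMat H' *ᵥ x) + b ^ 2 * (2 * (eCnt H : ℝ) - 2 * (eCnt H' : ℝ)) := by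
    simp only [Finset.sum_add_distrib, sub_mul, Finset.sum_sub_distrib, ← Finset.sum_mul]
    rw [← quad_expand, sum_adjMat H, sum_adjMat H']
    ring
  calc x ⬝ᵥ (adjMat H' *ᵥ x) + b ^ 2 * (2 * (eCnt H : ℝ) - 2 * (eCnt H' : ℝ))
      = ∑ i : Fin n, ∑ j : Fin n, (adjMat H' i j * (x i * x j)
        + (adjMat H i j - adjMat H' i j) * b ^ 2) := hre.symm
    _ ≤ ∑ i : Fin n, ∑ j : Fin n, adjMat H i j * (x i * x j) := hsum
    _ = x ⬝ᵥ (adjMat H *ᵥ x) := (quad_expand H x).symm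

lemma eCnt_iso {n : ℕ} {G G' : SimpleGraph (Fin n)} (e : G ≃g G') : eCnt G = eCnt G' :=
  Nat.card_congr e.mapEdgeSet

set_option maxHeartbeats 1000000 in
theorem stmt_18 {W : Type*} (r a : ℕ) (hr : 2 ≤ r) (F : SimpleGraph W) (h : HypStar r a F) :
    ∃ n₀ : ℕ, ∀ n ≥ n₀, ∀ H : SimpleGraph (Fin n), FFree F H → eCnt H = exNum n F →
      specRad (turanGraph n r) + (2 * a / n) * (1 - 2 / n) ≤ specRad H := by
  obtain ⟨m₀, hm⟩ := h
  refine ⟨max m₀ 4, fun n hn H hF hext => ?_⟩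
  have hnm : m₀ ≤ n := le_trans (le_max_left _ _) hn
  have hn4 : 4 ≤ n := le_trans (le_max_right _ _) hn
  have hr0 : 0 < r := by omega
  obtain ⟨hex, hstruct⟩ := hm n hnm
  obtain ⟨⟨H', hle, ⟨φ⟩⟩, hcnt⟩ := hstruct H hF hext
  have hH'T : eCnt H' = eCnt (turanGraph n r) := eCnt_iso φ
  have hcnt2 : (eCnt H : ℝ) = (eCnt H' : ℝ) + a := by
    rw [hH'T]; exact_mod_cast congrArg (Nat.cast : ℕ → ℝ) hcnt
  set p : ℕ := n / r with hpdef
  set lam : ℝ := tLam n r with hlamdef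
  have hp2 : p ≤ n / 2 := Nat.div_le_div_left hr (by norm_num)
  have hpn : (p : ℝ) ≤ (n : ℝ) / 2 := by
    calc (p : ℝ) ≤ ((n / 2 : ℕ) : ℝ) := by exact_mod_cast hp2
      _ ≤ (n : ℝ) / 2 := Nat.cast_div_le
  have hnR : (4 : ℝ) ≤ (n : ℝ) := by exact_mod_cast hn4
  have hp0 : (0 : ℝ) ≤ (p : ℝ) := Nat.cast_nonneg _
  have hlamge : (n : ℝ) - (p : ℝ) - 1 ≤ lam := tLam_ge hr0
  have hlam1 : (1 : ℝ) ≤ lam := by linarith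
  have hMn : (n : ℝ) ≤ lam + (p : ℝ) + 1 := by linarith
  have hL3 : (3 : ℝ) ≤ lam + (p : ℝ) := by linarith
  have hb0 : (0 : ℝ) ≤ lam + (p : ℝ) := by linarith
  -- spectral radius of the Turán graph is at most lam
  have hTle : specRad (turanGraph n r) ≤ lam :=
    specRad_upper _ lam (by linarith) (tVec n r)
      (fun i => lt_of_lt_of_le (by linarith) (tVec_lb hr0 i)) (tVec_eigen hr0)
  -- the transported eigenvector
  set x : Fin n → ℝ := fun u => tVec n r (φ u) with hxdef
  have hxlb : ∀ u, lam + (p : ℝ) ≤ x u := fun u => tVec_lb hr0 (φ u)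
  have hxub : ∀ u, x u ≤ lam + (p : ℝ) + 1 := fun u => tVec_ub hr0 (φ u)
  have heig : adjMat H' *ᵥ x = lam • x := by
    classical
    funext u
    have h0 : (adjMat (turanGraph n r) *ᵥ tVec n r) (φ u) = lam * tVec n r (φ u) := by
      rw [tVec_eigen hr0]; simp [hlamdef]
    have hmv0 : (adjMat (turanGraph n r) *ᵥ tVec n r) (φ u)
        = ∑ w : Fin n, adjMat (turanGraph n r) (φ u) w * tVec n r w := rfl
    have hsum : ∑ j : Fin n, adjMat H' u j * x j
        = ∑ w : Fin n, adjMat (turanGraph n r) (φ u) w * tVec n r w := by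
      rw [← Equiv.sum_comp φ.toEquiv
        (fun w => adjMat (turanGraph n r) (φ u) w * tVec n r w)]
      refine Finset.sum_congr rfl fun j _ => ?_
      have hadj : adjMat H' u j = adjMat (turanGraph n r) (φ u) (φ j) := by
        rw [adjMat_apply, adjMat_apply]
        by_cases hA : H'.Adj u j
        · rw [if_pos hA, if_pos (φ.map_adj_iff.mpr hA)]
        · rw [if_neg hA, if_neg (fun hc => hA (φ.map_adj_iff.mp hc))]
      show adjMat H' u j * x j = adjMat (turanGraph n r) (φ u) (φ j) * tVec n r (φ j)
      rw [hadj]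
    show ∑ j : Fin n, adjMat H' u j * x j = (lam • x) u
    rw [Pi.smul_apply, smul_eq_mul, hsum, ← hmv0]
    exact h0
  clear_value lam x
  -- quadratic form facts
  set X : ℝ := x ⬝ᵥ x with hXdef
  have hXub : X ≤ (n : ℝ) * (lam + (p : ℝ) + 1) ^ 2 := by
    rw [hXdef]
    calc x ⬝ᵥ x = ∑ u : Fin n, x u * x u := rfl
      _ ≤ ∑ u : Fin n, (lam + (p : ℝ) + 1) ^ 2 := by
          refine Finset.sum_le_sum fun u _ => ?_
          nlinarith [hxlb u, hxub u]
      _ = (n : ℝ) * (lam + (p : ℝ) + 1) ^ 2 := by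
          rw [Finset.sum_const, Finset.card_univ, Fintype.card_fin, nsmul_eq_mul]
  have hn0 : 0 < n := by omega
  have hXpos : 0 < X := by
    rw [hXdef]
    have hne : Nonempty (Fin n) := Fin.pos_iff_nonempty.mp hn0
    refine Finset.sum_pos (fun u _ => ?_) Finset.univ_nonempty
    nlinarith [hxlb u]
  have hq := quad_ineq H' H hle x (lam + (p : ℝ)) hb0 hxlb
  have hdot : x ⬝ᵥ (adjMat H' *ᵥ x) = lam * X := by
    rw [heig, hXdef]
    simp [dotProduct_smul]
  have hlow := specRad_lower hn0 H x
  have h1 : lam * X + (lam + (p : ℝ)) ^ 2 * (2 * (a : ℝ)) ≤ specRad H * X := by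
    have h2a : 2 * (eCnt H : ℝ) - 2 * (eCnt H' : ℝ) = 2 * (a : ℝ) := by
      rw [hcnt2]; ring
    rw [hdot, h2a] at hq
    exact le_trans hq hlow
  have h2 : lam + ((lam + (p : ℝ)) ^ 2 * (2 * (a : ℝ))) / X ≤ specRad H := by
    rw [← mul_le_mul_iff_of_pos_right hXpos]
    have hexp : (lam + ((lam + (p : ℝ)) ^ 2 * (2 * (a : ℝ))) / X) * X
        = lam * X + (lam + (p : ℝ)) ^ 2 * (2 * (a : ℝ)) := by
      field_simp
    rw [hexp]
    exact h1
  -- final numeric comparison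
  have ha0 : (0 : ℝ) ≤ (a : ℝ) := Nat.cast_nonneg _
  set M : ℝ := lam + (p : ℝ) + 1 with hMdef
  have hM0 : (0 : ℝ) < M := by rw [hMdef]; linarith
  have hnM2 : (0 : ℝ) < (n : ℝ) * M ^ 2 := by positivity
  have h3 : ((lam + (p : ℝ)) ^ 2 * (2 * (a : ℝ))) / ((n : ℝ) * M ^ 2)
      ≤ ((lam + (p : ℝ)) ^ 2 * (2 * (a : ℝ))) / X :=
    div_le_div_of_nonneg_left (by positivity) hXpos hXub
  have h4 : (2 * (a : ℝ) / (n : ℝ)) * (1 - 2 / (n : ℝ))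
      ≤ ((lam + (p : ℝ)) ^ 2 * (2 * (a : ℝ))) / ((n : ℝ) * M ^ 2) := by
    have hn0R : (0 : ℝ) < (n : ℝ) := by linarith
    have hLM : lam + (p : ℝ) = M - 1 := by rw [hMdef]; ring
    rw [hLM]
    have hlhs : (2 * (a : ℝ) / (n : ℝ)) * (1 - 2 / (n : ℝ))
        = (2 * (a : ℝ) * ((n : ℝ) - 2)) / ((n : ℝ) ^ 2) := by
      field_simp
    rw [hlhs, div_le_div_iff₀ (by positivity) hnM2]
    have hfact : (0 : ℝ) ≤ (a : ℝ) * ((n : ℝ) * (M * (M - (n : ℝ)))) := by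
      apply mul_nonneg ha0
      apply mul_nonneg (by linarith)
      apply mul_nonneg (by linarith)
      linarith
    nlinarith [hfact, mul_nonneg ha0 (mul_nonneg hn0R.le hn0R.le)]
  calc specRad (turanGraph n r) + 2 * (a : ℝ) / (n : ℝ) * (1 - 2 / (n : ℝ))
      ≤ lam + ((lam + (p : ℝ)) ^ 2 * (2 * (a : ℝ))) / X := by
        have := le_trans h4 h3
        linarith
    _ ≤ specRad H := h2
end
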